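/- arXiv:1908.07382 — 5 statements merged into one kernel-verified Lean document; each statement's English description precedes it below -/
import Mathlib

section
/- Let F be a free group on finitely many generators acting continuously on a compact metric space X, let w = w_0 w_1 w_2 … be an infinite reduced word, and let ω_w(x) = ⋂_{n∈ℕ} cl{f_{w_0 ⋯ w_k}(x) : k > n}. Then for every y ∈ ω_w(x) there exist distinct i, j ∈ S such that f_i(y) ∈ ω_w(x) and f_j(y) ∈ ω_w(x). -/
/-- Reduced words over the alphabet `S` of generators and inverses (`ι` = formal inverse). -/
def Reduced {S : Type*} (ι : S → S) (l : List S) : Prop :=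
  l.Chain' (fun a b => b ≠ ι a)

/-- The action of a word `l` on `x`: `f_{uv} = f_v ∘ f_u`. -/
def act {S X : Type*} (f : S → X → X) (l : List S) (x : X) : X :=
  l.foldl (fun y s => f s y) x

/-- The prefix `w_0 w_1 ⋯ w_k` of an infinite word `w`. -/
def prefixWord {S : Type*} (w : ℕ → S) (k : ℕ) : List S :=
  (List.range (k + 1)).map w

/-- `ω_w(x) = ⋂ₙ cl { f_{w_0⋯w_k}(x) : k > n }`. -/
def omegaW {S X : Type*} [MetricSpace X] (f : S → X → X) (w : ℕ → S) (x : X) : Set X :=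
  ⋂ n : ℕ, closure {y | ∃ k : ℕ, n < k ∧ y = act f (prefixWord w k) x}

lemma act_append_singleton {S X : Type*} (f : S → X → X) (l : List S) (s : S) (x : X) :
    act f (l ++ [s]) x = f s (act f l x) := by
  simp [act, List.foldl_append]

lemma prefixWord_succ {S : Type*} (w : ℕ → S) (k : ℕ) :
    prefixWord w (k + 1) = prefixWord w k ++ [w (k + 1)] := by
  simp [prefixWord, List.range_succ]

lemma mem_omegaW_iff {S X : Type*} [MetricSpace X] (f : S → X → X) (w : ℕ → S) (x y : X) :
    y ∈ omegaW f w x ↔ ∀ n : ℕ, ∀ ε > 0, ∃ k : ℕ, n < k ∧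
      dist (act f (prefixWord w k) x) y < ε := by
  constructor
  · intro hy n ε hε
    have h := Set.mem_iInter.mp hy n
    rcases Metric.mem_closure_iff.mp h ε hε with ⟨z, ⟨k, hk, rfl⟩, hd⟩
    exact ⟨k, hk, by rwa [dist_comm]⟩
  · intro h
    refine Set.mem_iInter.mpr fun n => Metric.mem_closure_iff.mpr fun ε hε => ?_
    rcases h n ε hε with ⟨k, hk, hd⟩
    exact ⟨_, ⟨k, hk, rfl⟩, by rwa [dist_comm]⟩

/-- for a free group action and an infinite reduced word `w`, every
`y ∈ ω_w(x)` admits distinct `i, j ∈ S` with `f_i(y), f_j(y) ∈ ω_w(x)`. -/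
theorem omegaW_two_letter_invariance {S X : Type*} [Fintype S]
    [MetricSpace X] [CompactSpace X]
    (ι : S → S) (hι : ∀ s, ι (ι s) = s) (hιne : ∀ s, ι s ≠ s)
    (f : S → X → X) (hcont : ∀ s, Continuous (f s))
    (hinv : ∀ s y, f (ι s) (f s y) = y)
    (w : ℕ → S) (hw : ∀ n, w (n + 1) ≠ ι (w n)) (x : X) :
    ∀ y ∈ omegaW f w x, ∃ i j : S, i ≠ j ∧ f i y ∈ omegaW f w x ∧ f j y ∈ omegaW f w x := by
  intro y hy
  set g : ℕ → X := fun k => act f (prefixWord w k) x with hg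
  have hgsucc : ∀ k, g (k + 1) = f (w (k + 1)) (g k) := fun k => by
    simp [hg, prefixWord_succ, act_append_singleton]
  have hmem := (mem_omegaW_iff f w x y).mp hy
  have hchoice : ∀ n : ℕ, ∃ k : ℕ, n < k ∧ dist (g k) y < 1 / (n + 1) := fun n =>
    hmem n (1 / (n + 1)) (by positivity)
  choose u hu hud using hchoice
  obtain ⟨⟨s, t⟩, hp⟩ :=
    Finite.exists_infinite_fiber (fun n : ℕ => (w (u n + 1), ι (w (u n))))
  rw [Set.infinite_coe_iff] at hp
  have hinf : ∀ N : ℕ, ∃ n, N < n ∧ w (u n + 1) = s ∧ ι (w (u n)) = t := by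
    intro N
    obtain ⟨n, hn, hlt⟩ := hp.exists_gt N
    simp only [Set.mem_preimage, Set.mem_singleton_iff, Prod.mk.injEq] at hn
    exact ⟨n, hlt, hn.1, hn.2⟩
  obtain ⟨n0, _, hs0, ht0⟩ := hinf 0
  have hst : s ≠ t := by
    rw [← hs0, ← ht0]; exact hw (u n0)
  have hdyδ : ∀ δ : ℝ, 0 < δ → ∀ M : ℕ, 1 / (M + 1 : ℝ) < δ → ∀ n, M < n →
      dist (g (u n)) y < δ := by
    intro δ hδ M hM n hn
    calc dist (g (u n)) y < 1 / (n + 1) := hud n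
      _ ≤ 1 / (M + 1) := by
          apply one_div_le_one_div_of_le (by positivity)
          exact_mod_cast Nat.succ_le_succ hn.le
      _ < δ := hM
  refine ⟨s, t, hst, ?_, ?_⟩
  · rw [mem_omegaW_iff]
    intro N ε hε
    obtain ⟨δ, hδ, hδε⟩ := Metric.continuous_iff.mp (hcont s) y ε hε
    obtain ⟨M, hM⟩ := exists_nat_one_div_lt hδ
    obtain ⟨n, hn, hsn, htn⟩ := hinf (max N M)
    have hnN : N < n := lt_of_le_of_lt (le_max_left _ _) hn
    have hnM : M < n := lt_of_le_of_lt (le_max_right _ _) hn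
    refine ⟨u n + 1, lt_trans hnN (Nat.lt_succ_of_lt (hu n)), ?_⟩
    have heq : act f (prefixWord w (u n + 1)) x = f s (g (u n)) := by
      rw [← hsn, ← hgsucc (u n)]
    rw [heq]
    exact hδε _ (hdyδ δ hδ M hM n hnM)
  · rw [mem_omegaW_iff]
    intro N ε hε
    obtain ⟨δ, hδ, hδε⟩ := Metric.continuous_iff.mp (hcont t) y ε hε
    obtain ⟨M, hM⟩ := exists_nat_one_div_lt hδ
    obtain ⟨n, hn, hsn, htn⟩ := hinf (max (N + 1) M)
    have hnN : N + 1 < n := lt_of_le_of_lt (le_max_left _ _) hn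
    have hnM : M < n := lt_of_le_of_lt (le_max_right _ _) hn
    have hun : N + 1 < u n := lt_trans hnN (hu n)
    obtain ⟨m, hm⟩ : ∃ m, u n = m + 1 :=
      ⟨u n - 1, (Nat.succ_pred_eq_of_pos (by omega)).symm⟩
    have hmN : N < m := by omega
    refine ⟨m, hmN, ?_⟩
    have heq : act f (prefixWord w m) x = f t (g (u n)) := by
      have : g m = f (ι (w (m + 1))) (g (m + 1)) := by
        rw [hgsucc m, hinv]
      rw [show act f (prefixWord w m) x = g m from rfl, this, ← hm, htn]
    rw [heq]
    exact hδε _ (hdyδ δ hδ M hM n hnM)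
end

section
/- Let G be a finitely generated free group or monoid acting continuously on a compact metric space X. For every x ∈ X and every w ∈ W_∞, the limit set ω_w(x) is internally chain transitive. -/
/-- An `ε`-chain in `Y` indexed by the word `u`. -/
def ChainIn {S X : Type*} [MetricSpace X] (f : S → X → X) (Y : Set X) (ε : ℝ)
    (u : List S) (c : ℕ → X) : Prop :=
  (∀ i ≤ u.length, c i ∈ Y) ∧
  ∀ i, ∀ h : i < u.length, dist (f (u.get ⟨i, h⟩) (c i)) (c (i + 1)) < ε

/-- Internal chain transitivity. -/
def ICT {S X : Type*} [MetricSpace X] (ι : S → S) (f : S → X → X) (Y : Set X) : Prop :=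
  ∀ x ∈ Y, ∀ y ∈ Y, ∀ ε > (0 : ℝ), ∃ u : List S, Reduced ι u ∧
    ∃ c : ℕ → X, ChainIn f Y ε u c ∧ c 0 = x ∧ c u.length = y

open Filter Topology Set

section WordOrbits

variable {S X : Type*}

lemma reduced_map_range {ι : S → S} {v : ℕ → S} (hv : ∀ n, v (n + 1) ≠ ι (v n)) (k m : ℕ) :
    Reduced ι ((List.range m).map fun i => v (k + i)) := by
  rw [Reduced, List.Chain', List.isChain_map, List.isChain_range]
  exact fun i _ => hv (k + i)

def wordOrbit (f : S → X → X) (w : ℕ → S) (x : X) (k : ℕ) : X :=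
  act f (prefixWord w k) x

lemma wordOrbit_succ (f : S → X → X) (w : ℕ → S) (x : X) (k : ℕ) :
    wordOrbit f w x (k + 1) = f (w (k + 1)) (wordOrbit f w x k) := by
  simp [wordOrbit, act, prefixWord, List.range_succ, List.foldl_append]

variable [MetricSpace X] {f : S → X → X}

lemma mem_omegaW_iff_s8 {w : ℕ → S} {x p : X} :
    p ∈ omegaW f w x ↔ MapClusterPt p atTop (wordOrbit f w x) := by
  have htail : ∀ n, {y | ∃ k, n < k ∧ y = act f (prefixWord w k) x} =
      wordOrbit f w x '' Ici (n + 1) := fun n => by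
    ext y
    simp [wordOrbit, eq_comm]
  simp only [omegaW, mem_iInter, htail, mapClusterPt_atTop_iff_forall_mem_closure]
  exact ⟨fun h i => closure_mono (image_mono (Ici_subset_Ici.2 i.le_succ)) (h i),
    fun h n => h (n + 1)⟩

variable {v : ℕ → S} {a : ℕ → X}

lemma chainIn_of_shadow (ha : ∀ k, a (k + 1) = f (v k) (a k)) {Y : Set X} {ε δ : ℝ}
    (hδε : δ ≤ ε / 2) (hfδ : ∀ p q, dist p q < δ → ∀ s, dist (f s p) (f s q) < ε / 2)
    {k m : ℕ} {c : ℕ → X} (hc : ∀ i ≤ m, c i ∈ Y ∧ dist (c i) (a (k + i)) < δ) :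
    ChainIn f Y ε ((List.range m).map fun i => v (k + i)) c := by
  refine ⟨fun i hi => (hc i (by simpa using hi)).1, fun i hi => ?_⟩
  simp only [List.length_map, List.length_range] at hi
  simp only [List.get_eq_getElem, List.getElem_map, List.getElem_range]
  calc dist (f (v (k + i)) (c i)) (c (i + 1))
      ≤ dist (f (v (k + i)) (c i)) (f (v (k + i)) (a (k + i)))
          + dist (a (k + i + 1)) (c (i + 1)) := by
        rw [ha]; exact dist_triangle _ _ _
    _ < ε / 2 + δ := by
        refine add_lt_add (hfδ _ _ (hc i hi.le).2 _) ?_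
        rw [dist_comm]; exact (hc (i + 1) hi).2
    _ ≤ ε := by linarith

theorem exists_chainIn_setOf_mapClusterPt [CompactSpace X] (hf : UniformEquicontinuous f)
    (ha : ∀ k, a (k + 1) = f (v k) (a k)) {y z : X} (hy : MapClusterPt y atTop a)
    (hz : MapClusterPt z atTop a) {ε : ℝ} (hε : 0 < ε) :
    ∃ k m : ℕ, ∃ c : ℕ → X, ChainIn f {p | MapClusterPt p atTop a} ε
      ((List.range m).map fun i => v (k + i)) c ∧ c 0 = y ∧ c m = z := by
  set Y := {p | MapClusterPt p atTop a}
  obtain ⟨δ, hδ, hδε, hfδ⟩ : ∃ δ > 0, δ ≤ ε / 2 ∧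
      ∀ p q, dist p q < δ → ∀ s, dist (f s p) (f s q) < ε / 2 := by
    obtain ⟨δ₀, hδ₀, hfδ₀⟩ := Metric.uniformEquicontinuous_iff.1 hf (ε / 2) (half_pos hε)
    exact ⟨min δ₀ (ε / 2), lt_min hδ₀ (half_pos hε), min_le_right _ _,
      fun p q h => hfδ₀ p q (h.trans_le (min_le_left _ _))⟩
  have hattr : ∀ᶠ k in atTop, a k ∈ Metric.thickening δ Y :=
    (isCompact_univ (X := X)).tendsto_nhdsSet_of_mapClusterPt (s' := Y) (by simp)
      (fun _ _ hp => hp) (Metric.thickening_mem_nhdsSet Y hδ)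
  obtain ⟨N, hN⟩ := eventually_atTop.1 hattr
  have hshadow : ∀ k, ∃ q ∈ Y, N ≤ k → dist (a k) q < δ := fun k => by
    by_cases hk : N ≤ k
    · obtain ⟨q, hq, hdq⟩ := Metric.mem_thickening_iff.1 (hN k hk)
      exact ⟨q, hq, fun _ => hdq⟩
    · exact ⟨y, hy, fun h => absurd h hk⟩
  choose P hPY hPdist using hshadow
  obtain ⟨k₁, hk₁, hy₁⟩ := (hy.frequently (Metric.ball_mem_nhds y hδ)).forall_exists_of_atTop N
  obtain ⟨k₂, hk₂, hz₂⟩ :=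
    (hz.frequently (Metric.ball_mem_nhds z hδ)).forall_exists_of_atTop (k₁ + 1)
  set m := k₂ - k₁
  have hm : m ≠ 0 := by omega
  refine ⟨k₁, m, fun i => if i = 0 then y else if i = m then z else P (k₁ + i),
    chainIn_of_shadow ha hδε hfδ fun i hi => ?_, if_pos rfl, by simp [hm]⟩
  rcases Nat.eq_zero_or_pos i with rfl | hi₀
  · exact ⟨hy, by simpa [dist_comm] using hy₁⟩
  rcases hi.eq_or_lt with rfl | him
  · simp only [hm, if_false, if_true, show k₁ + m = k₂ by omega]
    exact ⟨hz, by simpa [dist_comm] using hz₂⟩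
  · simp only [hi₀.ne', him.ne, if_false]
    exact ⟨hPY _, by rw [dist_comm]; exact hPdist _ (by omega)⟩

end WordOrbits

theorem omegaW_ICT_general {S X : Type*} [Fintype S]
    [MetricSpace X] [CompactSpace X]
    (ι : S → S)
    (f : S → X → X) (hcont : ∀ s, Continuous (f s))
    (w : ℕ → S) (hw : ∀ n, w (n + 1) ≠ ι (w n)) (x : X) :
    ICT ι f (omegaW f w x) := by
  have hω : omegaW f w x = {p | MapClusterPt p atTop (wordOrbit f w x)} :=
    Set.ext fun _ => mem_omegaW_iff_s8
  have hf : UniformEquicontinuous f :=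
    uniformEquicontinuous_finite.2 fun s => CompactSpace.uniformContinuous_of_continuous (hcont s)
  rw [hω]
  intro y hy z hz ε hε
  obtain ⟨k, m, c, hc, hc₀, hcm⟩ :=
    exists_chainIn_setOf_mapClusterPt hf (wordOrbit_succ f w x) hy hz hε
  exact ⟨_, reduced_map_range (v := fun n => w (n + 1)) (fun n => hw (n + 1)) k m, c, hc, hc₀,
    by simpa using hcm⟩

/-- every `ω_w`-limit set is internally chain transitive. -/
theorem omegaW_ICT {S X : Type*} [Fintype S]
    [MetricSpace X] [CompactSpace X]
    (ι : S → S) (hι : ∀ s, ι (ι s) = s) (hιne : ∀ s, ι s ≠ s)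
    (f : S → X → X) (hcont : ∀ s, Continuous (f s))
    (hinv : ∀ s y, f (ι s) (f s y) = y)
    (w : ℕ → S) (hw : ∀ n, w (n + 1) ≠ ι (w n)) (x : X) :
    ICT ι f (omegaW f w x) :=
  omegaW_ICT_general ι f hcont w hw x
end

section
/- Let G be a finitely generated free group acting continuously on a compact metric space X. For every x ∈ X and every infinite reduced word w, the limit set ω_w(x) is consistently internally chain transitive. -/
/-- Consistent internal chain transitivity. -/
def CICT {S X : Type*} [MetricSpace X] (ι : S → S) (f : S → X → X) (Y : Set X) : Prop :=
  ∃ iFun tFun : X → S, (∀ x ∈ Y, iFun x ≠ ι (tFun x)) ∧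
    ∀ x ∈ Y, ∀ y ∈ Y, ∀ ε > (0 : ℝ), ∃ u : List S, Reduced ι u ∧
      u.head? = some (iFun x) ∧ u.getLast? = some (tFun y) ∧
      ∃ c : ℕ → X, ChainIn f Y ε u c ∧ c 0 = x ∧ c u.length = y

/-!
Write `a k = f_{w_0⋯w_k}(x)`, so that `ω_w(x)` is the set of cluster points of `a`. By pigeonhole
over the finitely many pairs of letters, every `y ∈ ω_w(x)` is a limit of `a k` along times `k`
with a fixed pair `(w (k + 1), w k) =: (i(y), t(y))`; as `w` is reduced, `i(y) ≠ t(y)⁻¹`.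
By compactness `a k` is eventually `δ`-close to `ω_w(x)`. Given `y, z`, take a late time `k` with
`a k` near `y` and a later time `m` with `a m` near `z`: replacing each orbit point in between by a
nearby point of `ω_w(x)` turns the orbit segment into an `ε`-chain in `ω_w(x)` (the finitely many
generators are uniformly equicontinuous), indexed by the reduced word `w_{k+1}⋯w_m`, which begins
with `i(y)` and ends with `t(z)`.
-/

open Filter Topology Set

section ClusterPoints

variable {α C X : Type*} [MetricSpace X] {F : Filter α} {a : α → X} {y : X}

theorem MapClusterPt.exists_mapClusterPt_inf_principal_preimage [Finite C]
    (h : MapClusterPt y F a) (col : α → C) :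
    ∃ c, MapClusterPt y (F ⊓ 𝓟 (col ⁻¹' {c})) a := by
  by_contra! hnone
  simp only [mapClusterPt_iff_frequently, not_forall, not_frequently,
    eventually_inf_principal, exists_prop] at hnone
  choose s hs hfar using hnone
  have hfar' : ∀ᶠ k in F, ∀ c, k ∈ col ⁻¹' {c} → a k ∉ s c := eventually_all.2 hfar
  obtain ⟨k, hk, hfark⟩ :=
    ((mapClusterPt_iff_frequently.1 h _ (iInter_mem.2 hs)).and_eventually hfar').exists
  exact hfark (col k) rfl (mem_iInter.1 hk (col k))

theorem eventually_exists_mapClusterPt_dist_lt [CompactSpace X] {δ : ℝ} (hδ : 0 < δ) :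
    ∀ᶠ k in F, ∃ y, MapClusterPt y F a ∧ dist (a k) y < δ := by
  by_contra hfar
  simp only [not_eventually, not_exists, not_and, not_lt] at hfar
  have := frequently_iff_neBot.1 hfar
  obtain ⟨p, hp⟩ := exists_clusterPt_of_compactSpace (map a (F ⊓ 𝓟 {k | ∀ y,
    MapClusterPt y F a → δ ≤ dist (a k) y}))
  have hpF : MapClusterPt p F a := MapClusterPt.mono hp inf_le_left
  obtain ⟨k, hfark, hk⟩ := (frequently_inf_principal.1
    (hp.frequently (Metric.ball_mem_nhds p hδ))).exists
  exact (hfark p hpF).not_gt hk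

end ClusterPoints

theorem exists_le_mem_dist_lt_of_mapClusterPt {X : Type*} [MetricSpace X] {a : ℕ → X} {y : X}
    {s : Set ℕ} (h : MapClusterPt y (atTop ⊓ 𝓟 s) a) (n : ℕ) {δ : ℝ} (hδ : 0 < δ) :
    ∃ k, n ≤ k ∧ k ∈ s ∧ dist (a k) y < δ := by
  have := mapClusterPt_iff_frequently.1 h _ (Metric.ball_mem_nhds y hδ)
  rw [frequently_inf_principal, frequently_atTop] at this
  exact this n

theorem act_prefixWord_succ {S X : Type*} (f : S → X → X) (w : ℕ → S) (x : X) (k : ℕ) :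
    act f (prefixWord w (k + 1)) x = f (w (k + 1)) (act f (prefixWord w k) x) := by
  simp only [act, prefixWord, List.range_succ, List.map_append, List.foldl_append]
  rfl

theorem omegaW_eq_setOf_mapClusterPt {S X : Type*} [MetricSpace X] (f : S → X → X)
    (w : ℕ → S) (x : X) :
    omegaW f w x = {y | MapClusterPt y atTop fun k => act f (prefixWord w k) x} := by
  ext y
  simp only [omegaW, mem_iInter, mem_ofPred_eq, MapClusterPt,
    (atTop_basis_Ioi.map _).clusterPt_iff_forall_mem_closure, forall_const]
  refine forall_congr' fun n => ?_
  congr! 2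
  ext z
  simp [eq_comm]

def wordSegment {S : Type*} (w : ℕ → S) (k n : ℕ) : List S :=
  (List.range n).map fun j => w (k + j)

section WordSegment

variable {S : Type*} (w : ℕ → S) (k n : ℕ)

@[simp]
theorem length_wordSegment : (wordSegment w k n).length = n := by
  simp [wordSegment]

@[simp]
theorem getElem_wordSegment (i : ℕ) (hi : i < (wordSegment w k n).length) :
    (wordSegment w k n)[i] = w (k + i) := by
  simp [wordSegment]

theorem head?_wordSegment_succ : (wordSegment w k (n + 1)).head? = some (w k) := by
  simp [wordSegment, List.range_succ_eq_map]

theorem getLast?_wordSegment_succ : (wordSegment w k (n + 1)).getLast? = some (w (k + n)) := by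
  simp [wordSegment, List.range_succ]

theorem reduced_wordSegment {ι : S → S} (hw : ∀ n, w (n + 1) ≠ ι (w n)) :
    Reduced ι (wordSegment w k n) := by
  rw [Reduced, List.Chain', List.isChain_iff_getElem]
  intro i hi
  simpa [← add_assoc] using hw (k + i)

end WordSegment

section Chains

variable {S X : Type*} [MetricSpace X] {f : S → X → X} {w : ℕ → S} {a : ℕ → X} {Y : Set X}

theorem exists_shadowing_seq {δ : ℝ} {k n : ℕ} (hn : 0 < n) {y z : X} (hy : y ∈ Y) (hz : z ∈ Y)
    (hay : dist (a k) y < δ) (haz : dist (a (k + n)) z < δ)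
    (hshadow : ∀ i, ∃ q ∈ Y, dist (a (k + i)) q < δ) :
    ∃ c : ℕ → X, c 0 = y ∧ c n = z ∧ ∀ i ≤ n, c i ∈ Y ∧ dist (a (k + i)) (c i) < δ := by
  choose q hqY hq using hshadow
  refine ⟨fun i => if i = 0 then y else if i = n then z else q i, by simp,
    by simp [hn.ne'], fun i _ => ?_⟩
  by_cases hi0 : i = 0
  · subst hi0; simpa using ⟨hy, hay⟩
  by_cases hin : i = n
  · subst hin; simpa [hi0] using ⟨hz, haz⟩
  simpa [hi0, hin] using ⟨hqY i, hq i⟩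

theorem chainIn_wordSegment (ha : ∀ k, a (k + 1) = f (w (k + 1)) (a k)) {ε δ : ℝ}
    (hδε : δ ≤ ε / 2) (hf : ∀ s p q, dist p q < δ → dist (f s p) (f s q) < ε / 2)
    {k n : ℕ} {c : ℕ → X} (hc : ∀ i ≤ n, c i ∈ Y ∧ dist (a (k + i)) (c i) < δ) :
    ChainIn f Y ε (wordSegment w (k + 1) n) c := by
  refine ⟨fun i hi => (hc i (by simpa using hi)).1, fun i hi => ?_⟩
  rw [List.get_eq_getElem, getElem_wordSegment]
  rw [length_wordSegment] at hi
  have hstep : f (w (k + 1 + i)) (a (k + i)) = a (k + (i + 1)) := by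
    rw [← add_assoc, ha, add_right_comm]
  calc dist (f (w (k + 1 + i)) (c i)) (c (i + 1))
      ≤ dist (f (w (k + 1 + i)) (c i)) (f (w (k + 1 + i)) (a (k + i)))
          + dist (a (k + (i + 1))) (c (i + 1)) := by
        rw [hstep]; exact dist_triangle _ _ _
    _ < ε / 2 + δ := by
        gcongr
        · exact hf _ _ _ (by rw [dist_comm]; exact (hc i hi.le).2)
        · exact (hc (i + 1) hi).2
    _ ≤ ε := by linarith

end Chains

theorem cict_setOf_mapClusterPt {S X : Type*} [Finite S] [MetricSpace X] [CompactSpace X]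
    {ι : S → S} {f : S → X → X} (hcont : ∀ s, Continuous (f s))
    {w : ℕ → S} (hw : ∀ n, w (n + 1) ≠ ι (w n))
    {a : ℕ → X} (ha : ∀ k, a (k + 1) = f (w (k + 1)) (a k)) :
    CICT ι f {y | MapClusterPt y atTop a} := by
  set Y := {y | MapClusterPt y atTop a}
  have : Nonempty S := ⟨w 0⟩
  obtain ⟨P, hP⟩ : ∃ P : X → S × S, ∀ y ∈ Y,
      MapClusterPt y (atTop ⊓ 𝓟 ((fun k => (w (k + 1), w k)) ⁻¹' {P y})) a := by
    choose! P hP using fun y (hy : y ∈ Y) =>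
      hy.exists_mapClusterPt_inf_principal_preimage fun k => (w (k + 1), w k)
    exact ⟨P, hP⟩
  refine ⟨fun y => (P y).1, fun y => (P y).2, fun y hy => ?_, fun y hy z hz ε hε => ?_⟩
  · obtain ⟨k, -, hk : (w (k + 1), w k) = P y, -⟩ :=
      exists_le_mem_dist_lt_of_mapClusterPt (hP y hy) 0 one_pos
    simpa only [← hk] using hw k
  obtain ⟨δ₀, hδ₀, hf⟩ := Metric.uniformEquicontinuous_iff.1 (uniformEquicontinuous_finite.2
    fun s => CompactSpace.uniformContinuous_of_continuous (hcont s)) (ε / 2) (half_pos hε)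
  obtain ⟨δ, hδ, hδδ₀, hδε⟩ : ∃ δ > 0, δ ≤ δ₀ ∧ δ ≤ ε / 2 :=
    ⟨min δ₀ (ε / 2), lt_min hδ₀ (half_pos hε), min_le_left _ _, min_le_right _ _⟩
  obtain ⟨N, hN⟩ := eventually_atTop.1 (eventually_exists_mapClusterPt_dist_lt (a := a) hδ)
  obtain ⟨k, hNk, hky : (w (k + 1), w k) = P y, hay⟩ :=
    exists_le_mem_dist_lt_of_mapClusterPt (hP y hy) N hδ
  obtain ⟨m, hkm, hmz : (w (m + 1), w m) = P z, haz⟩ :=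
    exists_le_mem_dist_lt_of_mapClusterPt (hP z hz) (k + 1) hδ
  obtain ⟨n, rfl⟩ := Nat.exists_eq_add_of_le hkm
  obtain ⟨c, hc0, hcn, hc⟩ := exists_shadowing_seq (n := n + 1) n.succ_pos hy hz hay
    (by simpa only [add_assoc, add_comm 1 n] using haz) fun i => hN (k + i) (by omega)
  refine ⟨wordSegment w (k + 1) (n + 1), reduced_wordSegment _ _ _ hw, ?_, ?_, c,
    chainIn_wordSegment ha hδε (fun s p q hpq => hf p q (hpq.trans_le hδδ₀) s) hc, hc0,
    by rwa [length_wordSegment]⟩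
  · simp only [head?_wordSegment_succ, ← hky]
  · simp only [getLast?_wordSegment_succ, ← hmz]

theorem omegaW_CICT_general {S X : Type*} [Fintype S]
    [MetricSpace X] [CompactSpace X]
    (ι : S → S)
    (f : S → X → X) (hcont : ∀ s, Continuous (f s))
    (w : ℕ → S) (hw : ∀ n, w (n + 1) ≠ ι (w n)) (x : X) :
    CICT ι f (omegaW f w x) := by
  rw [omegaW_eq_setOf_mapClusterPt]
  exact cict_setOf_mapClusterPt hcont hw (act_prefixWord_succ f w x)

/-- for a free group action, every `ω_w`-limit set is consistently
internally chain transitive. -/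
theorem omegaW_CICT {S X : Type*} [Fintype S]
    [MetricSpace X] [CompactSpace X]
    (ι : S → S) (hι : ∀ s, ι (ι s) = s) (hιne : ∀ s, ι s ≠ s)
    (f : S → X → X) (hcont : ∀ s, Continuous (f s))
    (hinv : ∀ s y, f (ι s) (f s y) = y)
    (w : ℕ → S) (hw : ∀ n, w (n + 1) ≠ ι (w n)) (x : X) :
    CICT ι f (omegaW f w x) :=
  omegaW_CICT_general ι f hcont w hw x
end

section
/- For a continuous action of a finitely generated free group or monoid G on a compact metric space X, every internally block transitive closed set Y ⊆ X is invariant: f_i(y) ∈ Y for all y ∈ Y and generators i ∈ S. -/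
open TopologicalSpace

/-- Left multiplication of a word by a letter, with cancellation. -/
def consRed {S : Type*} [DecidableEq S] (ι : S → S) (i : S) : List S → List S
  | [] => [i]
  | a :: t => if a = ι i then t else i :: a :: t

/-- Multiplication of reduced words: multiply the letters of `v` onto `u` from the right. -/
def mulRed {S : Type*} [DecidableEq S] (ι : S → S) (v u : List S) : List S :=
  v.foldr (consRed ι) u

/-- A `δ`-`G`-pseudo-orbit: `𝒪 : G → X` (defined on reduced words) with
`d(f_i(𝒪(u)), 𝒪(u·i)) < δ` for every `u ∈ G` and generator `i`. -/
def IsPseudoOrbit {S X : Type*} [DecidableEq S] [MetricSpace X] (ι : S → S)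
    (f : S → X → X) (δ : ℝ) (𝒪 : List S → X) : Prop :=
  ∀ l : List S, Reduced ι l → ∀ i : S,
    dist (f i (𝒪 l)) (𝒪 (mulRed ι l [i])) < δ

/-- `Y` is internally block transitive: for every `δ > 0` and finitely many points of
`Y` there is a `δ`-`G`-pseudo-orbit taking values in `Y` whose image contains them. -/
def IBT {S X : Type*} [DecidableEq S] [MetricSpace X] (ι : S → S) (f : S → X → X)
    (Y : Set X) : Prop :=
  ∀ δ > (0 : ℝ), ∀ (n : ℕ) (p : Fin n → X), (∀ k, p k ∈ Y) →
    ∃ 𝒪 : List S → X, IsPseudoOrbit ι f δ 𝒪 ∧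
      (∀ l : List S, Reduced ι l → 𝒪 l ∈ Y) ∧
      (∀ k, ∃ l : List S, Reduced ι l ∧ 𝒪 l = p k)

/-! Given `y ∈ Y` and `ε > 0`, an `ε`-pseudo-orbit in `Y` passing through `y` at the word `u`
takes the value `𝒪(u·i) ∈ Y` within `ε` of `f_i(y)`. Hence `f_i(y) ∈ closure Y = Y`. -/

section Reduced

variable {S : Type*} [DecidableEq S] (ι : S → S)

lemma Reduced.consRed {l : List S} (h : Reduced ι l) (i : S) : Reduced ι (consRed ι i l) := by
  cases l with
  | nil => exact List.isChain_singleton i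
  | cons a t =>
    by_cases hc : a = ι i
    · rw [_root_.consRed, if_pos hc]
      exact (List.isChain_cons.mp h).2
    · rw [_root_.consRed, if_neg hc]
      exact List.isChain_cons_cons.mpr ⟨hc, h⟩

lemma Reduced.mulRed (v : List S) {u : List S} (h : Reduced ι u) : Reduced ι (mulRed ι v u) := by
  induction v with
  | nil => exact h
  | cons a t ih => exact ih.consRed ι a

end Reduced

lemma IBT.apply_mem_closure {S X : Type*} [DecidableEq S] [MetricSpace X] {ι : S → S}
    {f : S → X → X} {Y : Set X} (hY : IBT ι f Y) {y : X} (hy : y ∈ Y) (i : S) :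
    f i y ∈ closure Y := by
  refine Metric.mem_closure_iff.mpr fun ε hε => ?_
  obtain ⟨𝒪, hpseudo, hmem, hhit⟩ := hY ε hε 1 (fun _ => y) (fun _ => hy)
  obtain ⟨u, hu, rfl⟩ := hhit 0
  exact ⟨𝒪 (mulRed ι u [i]), hmem _ (Reduced.mulRed ι u (List.isChain_singleton i)),
    hpseudo u hu i⟩

theorem ibt_invariant_general {S X : Type*} [DecidableEq S] [MetricSpace X] (ι : S → S) (f : S → X → X)
    (Y : Set X) (hYclosed : IsClosed Y) (hY : IBT ι f Y) :
    ∀ y ∈ Y, ∀ i : S, f i y ∈ Y :=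
  fun _ hy i => hYclosed.closure_subset (hY.apply_mem_closure hy i)

/-- every internally block transitive closed subset is invariant. -/
theorem ibt_invariant {S X : Type*} [DecidableEq S] [Fintype S]
    [MetricSpace X] [CompactSpace X]
    (ι : S → S) (hι : ∀ s, ι (ι s) = s) (hιne : ∀ s, ι s ≠ s)
    (f : S → X → X) (hcont : ∀ s, Continuous (f s))
    (hinv : ∀ s y, f (ι s) (f s y) = y)
    (Y : Set X) (hYclosed : IsClosed Y) (hY : IBT ι f Y) :
    ∀ y ∈ Y, ∀ i : S, f i y ∈ Y :=
  ibt_invariant_general ι f Y hYclosed hY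
end

section
/- A shift space X over a finitely generated free group is a shift of finite type if and only if it has the G-shadowing property: for every ε > 0 there exists δ > 0 such that every δ-G-pseudo-orbit in X is ε-shadowed by a point of X. -/
theorem reduced_consRed {S : Type*} [DecidableEq S] (ι : S → S) (i : S) {l : List S}
    (h : Reduced ι l) : Reduced ι (consRed ι i l) := by
  cases l with
  | nil => simp [consRed, Reduced, List.Chain']
  | cons a t =>
    have h' : List.Chain' (fun a b => b ≠ ι a) (a :: t) := h
    by_cases hc : a = ι i
    · simpa [consRed, hc, Reduced, List.Chain'] using h'.tail
    · simp only [consRed, if_neg hc]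
      exact List.isChain_cons_cons.mpr ⟨hc, h'⟩

theorem reduced_mulRed {S : Type*} [DecidableEq S] (ι : S → S) (v : List S) {u : List S}
    (h : Reduced ι u) : Reduced ι (mulRed ι v u) := by
  induction v with
  | nil => exact h
  | cons a t ih => exact reduced_consRed ι a ih

/-- The reduced words of the free group with inverse map `ι` on the alphabet `S`. -/
abbrev Word {S : Type*} (ι : S → S) := {l : List S // Reduced ι l}

/-- The length of a reduced word. -/
def wlen {S : Type*} {ι : S → S} (u : Word ι) : ℕ := u.1.length

/-- The empty word (identity element). -/
def emptyWord {S : Type*} (ι : S → S) : Word ι := ⟨[], List.isChain_nil⟩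

/-- A single-letter word. -/
def word1 {S : Type*} (ι : S → S) (i : S) : Word ι := ⟨[i], List.isChain_singleton i⟩

/-- The group product `v · u` as a reduced word. -/
def wmul {S : Type*} [DecidableEq S] {ι : S → S} (v : List S) (u : Word ι) : Word ι :=
  ⟨mulRed ι v u.1, reduced_mulRed ι v u.2⟩

/-- The product of two reduced words. -/
def wordMul {S : Type*} [DecidableEq S] {ι : S → S} (u v : Word ι) : Word ι :=
  wmul u.1 v

/-- The shift `σ_v`: `σ_v(x)(u) = x(vu)`. -/
def shiftBy {S A : Type*} [DecidableEq S] {ι : S → S} (v : List S) (x : Word ι → A) :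
    Word ι → A :=
  fun u => x (wmul v u)

/-- The metric on `𝒜^G`: `d(x,y) = inf({2^{-n} : x, y agree on all words of length < n})`. -/
noncomputable def shiftDist {S A : Type*} {ι : S → S} (x y : Word ι → A) : ℝ :=
  sInf {r | ∃ n : ℕ, (∀ u : Word ι, wlen u < n → x u = y u) ∧ r = (2 : ℝ) ^ (-(n : ℤ))}

/-- `B` (viewed as an `m`-block, i.e. only through its values on words of length `< m`)
occurs in `x`. -/
def occursIn {S A : Type*} [DecidableEq S] {ι : S → S} (x : Word ι → A) (m : ℕ)
    (B : Word ι → A) : Prop :=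
  ∃ u : Word ι, ∀ v : Word ι, wlen v < m → shiftBy u.1 x v = B v

/-- The shift space determined by a set `𝓕` of forbidden blocks (an element `(m, B)`
represents the `m`-block obtained by restricting `B` to words of length `< m`). -/
def shiftOf {S A : Type*} [DecidableEq S] (ι : S → S) (𝓕 : Set (ℕ × (Word ι → A))) :
    Set (Word ι → A) :=
  {x | ∀ p ∈ 𝓕, ¬ occursIn x p.1 p.2}

/-- A shift space: a subset of the full shift cut out by a set of forbidden blocks. -/
def IsShiftSpace {S A : Type*} [DecidableEq S] (ι : S → S) (X : Set (Word ι → A)) : Prop :=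
  ∃ 𝓕 : Set (ℕ × (Word ι → A)), X = shiftOf ι 𝓕

/-- A shift of finite type: cut out by finitely many forbidden blocks. -/
def IsSFT {S A : Type*} [DecidableEq S] (ι : S → S) (X : Set (Word ι → A)) : Prop :=
  ∃ 𝓕 : Set (ℕ × (Word ι → A)), 𝓕.Finite ∧ X = shiftOf ι 𝓕

/-! An SFT is cut out by blocks of bounded size `m`. A `2^{-N}`-pseudo-orbit with `N ≥ m` is
forced, letter by letter, to agree on its `(N+1)`-balls with the point `x u := 𝒪 u 1` reading
off the centres, so `x` shadows `𝒪` and every `m`-window of `x` is a window of some `𝒪 u ∈ X`.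
Conversely, if `1`-shadowing is achieved with `δ > 2^{-k}`, forbid every `(k+1)`-block that does
not occur in `X`. A point avoiding these blocks has, around every `u`, some `z_u ∈ X` agreeing
with it on the `(k+1)`-ball; the `z_u` form a `δ`-pseudo-orbit, and a `1`-shadowing point agrees
with `x` at every centre, so it is `x`, and `x ∈ X`. -/

theorem Reduced.tail {S : Type*} {ι : S → S} {i : S} {t : List S} (h : Reduced ι (i :: t)) :
    Reduced ι t :=
  (List.isChain_cons.mp h).2

section Words

variable {S : Type*} [DecidableEq S] {ι : S → S}

theorem consRed_eq_cons {i : S} {t : List S} (h : Reduced ι (i :: t)) :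
    consRed ι i t = i :: t := by
  cases t with
  | nil => rfl
  | cons b r => simp [consRed, (List.isChain_cons_cons.mp h).1]

theorem consRed_consRed_inv (hι : ∀ s, ι (ι s) = s) {l : List S} (h : Reduced ι l) (i : S) :
    consRed ι i (consRed ι (ι i) l) = l := by
  cases l with
  | nil => simp [consRed]
  | cons a t =>
    by_cases ha : a = i
    · subst ha
      simpa [consRed, hι] using consRed_eq_cons h
    · have ha' : a ≠ ι (ι i) := by rwa [hι]
      simp [consRed, ha']

theorem length_consRed_le (i : S) (l : List S) : (consRed ι i l).length ≤ l.length + 1 := by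
  cases l with
  | nil => simp [consRed]
  | cons a t =>
    by_cases h : a = ι i
    · simp [consRed, h]; omega
    · simp [consRed, h]

theorem mulRed_consRed (hι : ∀ s, ι (ι s) = s) (a : S) {w m : List S}
    (hw : Reduced ι w) (hm : Reduced ι m) :
    mulRed ι (consRed ι a w) m = consRed ι a (mulRed ι w m) := by
  cases w with
  | nil => rfl
  | cons b t =>
    by_cases hb : b = ι a
    · subst hb
      simp only [consRed, if_true]
      exact (consRed_consRed_inv hι (reduced_mulRed ι t hm) a).symm
    · simp only [consRed, if_neg hb]
      rfl

theorem mulRed_mulRed (hι : ∀ s, ι (ι s) = s) {u m : List S} (hu : Reduced ι u)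
    (hm : Reduced ι m) (l : List S) : mulRed ι (mulRed ι l u) m = mulRed ι l (mulRed ι u m) := by
  induction l with
  | nil => rfl
  | cons a t ih =>
    show mulRed ι (consRed ι a (mulRed ι t u)) m = consRed ι a (mulRed ι t (mulRed ι u m))
    rw [mulRed_consRed hι a (reduced_mulRed ι t hu) hm, ih]

theorem mulRed_nil {l : List S} (h : Reduced ι l) : mulRed ι l [] = l := by
  induction l with
  | nil => rfl
  | cons a t ih =>
    show consRed ι a (mulRed ι t []) = a :: t
    rw [ih h.tail, consRed_eq_cons h]

theorem wmul_emptyWord (u : Word ι) : wmul u.1 (emptyWord ι) = u :=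
  Subtype.ext (mulRed_nil u.2)

theorem wmul_wordMul (hι : ∀ s, ι (ι s) = s) (u w v : Word ι) :
    wmul (wordMul u w).1 v = wmul u.1 (wmul w.1 v) :=
  Subtype.ext (mulRed_mulRed hι w.2 v.2 u.1)

theorem wmul_cons (hι : ∀ s, ι (ι s) = s) (u : Word ι) {i : S} {t : List S}
    (h : Reduced ι (i :: t)) :
    wmul u.1 ⟨i :: t, h⟩ = wmul (wordMul u (word1 ι i)).1 ⟨t, h.tail⟩ := by
  rw [wmul_wordMul hι]
  exact Subtype.ext (by simp [wmul, word1, mulRed, consRed_eq_cons h])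

theorem wlen_wmul_singleton_le (i : S) (v : Word ι) : wlen (wmul [i] v) ≤ wlen v + 1 :=
  length_consRed_le i v.1

theorem shiftBy_shiftBy {A : Type*} (hι : ∀ s, ι (ι s) = s) (u w : Word ι) (x : Word ι → A) :
    shiftBy w.1 (shiftBy u.1 x) = shiftBy (wordMul u w).1 x := by
  funext v
  simp only [shiftBy, wmul_wordMul hι]

end Words

section Metric

variable {S A : Type*} {ι : S → S}

def EqOnBall (n : ℕ) (x y : Word ι → A) : Prop :=
  ∀ v : Word ι, wlen v < n → x v = y v

theorem EqOnBall.mono {m n : ℕ} {x y : Word ι → A} (h : EqOnBall n x y) (hmn : m ≤ n) :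
    EqOnBall m x y :=
  fun v hv => h v (lt_of_lt_of_le hv hmn)

theorem shiftDist_le_of_eqOnBall {x y : Word ι → A} {n : ℕ} (h : EqOnBall n x y) :
    shiftDist x y ≤ (2 : ℝ) ^ (-(n : ℤ)) :=
  csInf_le ⟨0, by rintro r ⟨m, -, rfl⟩; positivity⟩ ⟨n, h, rfl⟩

theorem eqOnBall_of_shiftDist_lt {x y : Word ι → A} {n : ℕ}
    (h : shiftDist x y < (2 : ℝ) ^ (-(n : ℤ))) : EqOnBall (n + 1) x y := by
  have hne : {r | ∃ m : ℕ, EqOnBall m x y ∧ r = (2 : ℝ) ^ (-(m : ℤ))}.Nonempty :=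
    ⟨1, 0, fun v hv => absurd hv (Nat.not_lt_zero _), by norm_num⟩
  obtain ⟨_, ⟨m, hm, rfl⟩, hr⟩ := exists_lt_of_csInf_lt hne h
  have hnm : n < m := by
    by_contra! hc
    exact hr.not_ge (zpow_le_zpow_right₀ (by norm_num) (by omega))
  exact hm.mono hnm

theorem exists_two_zpow_lt {ε : ℝ} (hε : 0 < ε) : ∃ k : ℕ, (2 : ℝ) ^ (-(k : ℤ)) < ε := by
  obtain ⟨k, hk⟩ := exists_pow_lt_of_lt_one hε (by norm_num : (2⁻¹ : ℝ) < 1)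
  exact ⟨k, by rwa [zpow_neg, zpow_natCast, ← inv_pow]⟩

end Metric

section ShiftSpaces

variable {S A : Type*} [DecidableEq S] {ι : S → S}

theorem shiftBy_mem_shiftOf (hι : ∀ s, ι (ι s) = s) {𝓕 : Set (ℕ × (Word ι → A))}
    {x : Word ι → A} (hx : x ∈ shiftOf ι 𝓕) (u : Word ι) : shiftBy u.1 x ∈ shiftOf ι 𝓕 := by
  rintro p hp ⟨w, hw⟩
  exact hx p hp ⟨wordMul u w, by rwa [← shiftBy_shiftBy hι]⟩

def LocallyIn (X : Set (Word ι → A)) (N : ℕ) (x : Word ι → A) : Prop :=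
  ∀ u : Word ι, ∃ z ∈ X, EqOnBall N z (shiftBy u.1 x)

theorem mem_shiftOf_of_locallyIn {𝓕 : Set (ℕ × (Word ι → A))} {m : ℕ}
    (h𝓕 : ∀ p ∈ 𝓕, p.1 ≤ m) {x : Word ι → A} (hx : LocallyIn (shiftOf ι 𝓕) m x) :
    x ∈ shiftOf ι 𝓕 := by
  rintro p hp ⟨u, hu⟩
  obtain ⟨z, hz, hzx⟩ := hx u
  exact hz p hp ⟨emptyWord ι, fun v hv => (hzx v (hv.trans_le (h𝓕 p hp))).trans (hu v hv)⟩

def HasShadowing (ι : S → S) (X : Set (Word ι → A)) : Prop :=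
  ∀ ε > (0 : ℝ), ∃ δ > (0 : ℝ), ∀ 𝒪 : Word ι → (Word ι → A),
    (∀ u, 𝒪 u ∈ X) →
    (∀ (u : Word ι) (i : S),
      shiftDist (shiftBy [i] (𝒪 u)) (𝒪 (wordMul u (word1 ι i))) < δ) →
    ∃ x ∈ X, ∀ u : Word ι, shiftDist (shiftBy u.1 x) (𝒪 u) < ε

end ShiftSpaces

section SFTShadowing

variable {S A : Type*} [DecidableEq S] {ι : S → S}

theorem eqOnBall_shiftBy_of_pseudoOrbit (hι : ∀ s, ι (ι s) = s) {𝒪 : Word ι → (Word ι → A)}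
    {N : ℕ} (h𝒪 : ∀ (u : Word ι) (i : S),
      shiftDist (shiftBy [i] (𝒪 u)) (𝒪 (wordMul u (word1 ι i))) < (2 : ℝ) ^ (-(N : ℤ)))
    (u : Word ι) : EqOnBall (N + 1) (𝒪 u) (shiftBy u.1 fun w => 𝒪 w (emptyWord ι)) := by
  rintro ⟨t, ht⟩ hlen
  induction t generalizing u with
  | nil =>
    show 𝒪 u (emptyWord ι) = 𝒪 (wmul u.1 (emptyWord ι)) (emptyWord ι)
    rw [wmul_emptyWord]
  | cons i t ih =>
    have hlen' : wlen (⟨t, ht.tail⟩ : Word ι) < N + 1 := by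
      simp only [wlen, List.length_cons] at hlen ⊢; omega
    have hstep := eqOnBall_of_shiftDist_lt (h𝒪 u i) ⟨t, ht.tail⟩ hlen'
    calc 𝒪 u ⟨i :: t, ht⟩ = shiftBy [i] (𝒪 u) ⟨t, ht.tail⟩ :=
          congrArg (𝒪 u) (Subtype.ext (consRed_eq_cons ht).symm)
      _ = _ := hstep.trans (ih _ ht.tail hlen')
      _ = _ := by simp only [shiftBy, wmul_cons hι u ht]

theorem IsSFT.hasShadowing (hι : ∀ s, ι (ι s) = s) {X : Set (Word ι → A)} (hX : IsSFT ι X) :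
    HasShadowing ι X := by
  obtain ⟨𝓕, h𝓕, rfl⟩ := hX
  obtain ⟨m, hm⟩ := (h𝓕.image Prod.fst).bddAbove
  intro ε hε
  obtain ⟨k, hk⟩ := exists_two_zpow_lt hε
  refine ⟨(2 : ℝ) ^ (-(max m k : ℤ)), by positivity, fun 𝒪 h𝒪X h𝒪 => ?_⟩
  have hagree := eqOnBall_shiftBy_of_pseudoOrbit hι (N := max m k) (by exact_mod_cast h𝒪)
  refine ⟨_, mem_shiftOf_of_locallyIn (m := m) (fun p hp => hm ⟨p, hp, rfl⟩)
    fun u => ⟨𝒪 u, h𝒪X u, (hagree u).mono (by omega)⟩, fun u => ?_⟩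
  refine (shiftDist_le_of_eqOnBall fun v hv => ?_).trans_lt hk
  exact (hagree u v (by omega)).symm

end SFTShadowing

section ShadowingSFT

variable {S A : Type*} {ι : S → S}

/-- Normalising the blocks to `a₀` off the `N`-ball makes this set finite. -/
def forbiddenBlocks (X : Set (Word ι → A)) (N : ℕ) (a₀ : A) : Set (ℕ × (Word ι → A)) :=
  {p | p.1 = N ∧ (∀ v, N ≤ wlen v → p.2 v = a₀) ∧ ¬ ∃ z ∈ X, EqOnBall N z p.2}

theorem finite_forbiddenBlocks [Finite S] [Finite A] (X : Set (Word ι → A)) (N : ℕ) (a₀ : A) :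
    (forbiddenBlocks X N a₀).Finite := by
  have : Finite {l : List S // l.length < N} := (List.finite_length_lt S N).to_subtype
  have : Finite {v : Word ι // wlen v < N} :=
    Finite.of_injective (fun v => (⟨v.1.1, v.2⟩ : {l : List S // l.length < N}))
      fun v w h => Subtype.ext (Subtype.ext (congrArg Subtype.val h :))
  have hB : {B : Word ι → A | ∀ v, N ≤ wlen v → B v = a₀}.Finite := by
    refine Set.Finite.of_finite_image (Set.toFinite
      ((fun B (v : {v : Word ι // wlen v < N}) => B v.1) '' _)) ?_
    intro B₁ h₁ B₂ h₂ h
    funext v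
    by_cases hv : wlen v < N
    · exact congrFun h ⟨v, hv⟩
    · rw [h₁ v (not_lt.mp hv), h₂ v (not_lt.mp hv)]
  exact (hB.image (Prod.mk N)).subset fun p ⟨hp, hp₂, _⟩ => ⟨p.2, hp₂, Prod.ext hp.symm rfl⟩

variable [DecidableEq S]

theorem subset_shiftOf_forbiddenBlocks (hι : ∀ s, ι (ι s) = s) {X : Set (Word ι → A)}
    (hX : IsShiftSpace ι X) (N : ℕ) (a₀ : A) : X ⊆ shiftOf ι (forbiddenBlocks X N a₀) := by
  obtain ⟨𝓕, rfl⟩ := hX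
  rintro x hx p ⟨hpN, -, hp⟩ ⟨u, hu⟩
  exact hp ⟨shiftBy u.1 x, shiftBy_mem_shiftOf hι hx u, fun v hv => hu v (hpN ▸ hv)⟩

theorem locallyIn_of_mem_shiftOf_forbiddenBlocks {X : Set (Word ι → A)} {N : ℕ} {a₀ : A}
    {x : Word ι → A} (hx : x ∈ shiftOf ι (forbiddenBlocks X N a₀)) : LocallyIn X N x := by
  intro u
  by_contra h
  refine hx (N, fun v => if wlen v < N then shiftBy u.1 x v else a₀)
    ⟨rfl, fun v hv => if_neg hv.not_gt, ?_⟩ ⟨u, fun v hv => (if_pos hv).symm⟩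
  rintro ⟨z, hz, hzB⟩
  exact h ⟨z, hz, fun v hv => (hzB v hv).trans (if_pos hv)⟩

theorem shiftDist_le_of_forall_eqOnBall_shiftBy (hι : ∀ s, ι (ι s) = s) {x : Word ι → A}
    {𝒪 : Word ι → (Word ι → A)} {k : ℕ} (h𝒪 : ∀ u, EqOnBall (k + 1) (𝒪 u) (shiftBy u.1 x))
    (u : Word ι) (i : S) :
    shiftDist (shiftBy [i] (𝒪 u)) (𝒪 (wordMul u (word1 ι i))) ≤ (2 : ℝ) ^ (-(k : ℤ)) := by
  refine shiftDist_le_of_eqOnBall fun v hv => ?_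
  have hiv := wlen_wmul_singleton_le i v
  calc shiftBy [i] (𝒪 u) v = x (wmul u.1 (wmul (word1 ι i).1 v)) := h𝒪 u _ (by omega)
    _ = shiftBy (wordMul u (word1 ι i)).1 x v := by simp only [shiftBy, wmul_wordMul hι]
    _ = 𝒪 (wordMul u (word1 ι i)) v := (h𝒪 _ v (by omega)).symm

theorem HasShadowing.exists_mem_of_locallyIn (hι : ∀ s, ι (ι s) = s) {X : Set (Word ι → A)}
    (hX : HasShadowing ι X) : ∃ N, ∀ x, LocallyIn X N x → x ∈ X := by
  obtain ⟨δ, hδ, hsh⟩ := hX 1 one_pos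
  obtain ⟨k, hk⟩ := exists_two_zpow_lt hδ
  refine ⟨k + 1, fun x hx => ?_⟩
  choose 𝒪 h𝒪X h𝒪 using hx
  obtain ⟨y, hyX, hy⟩ :=
    hsh 𝒪 h𝒪X fun u i => (shiftDist_le_of_forall_eqOnBall_shiftBy hι h𝒪 u i).trans_lt hk
  have hyx : y = x := funext fun u => by
    have hcentre := eqOnBall_of_shiftDist_lt (n := 0) (by simpa using hy u) (emptyWord ι)
      Nat.zero_lt_one
    simpa [shiftBy, wmul_emptyWord] using hcentre.trans (h𝒪 u (emptyWord ι) (Nat.succ_pos k))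
  exact hyx ▸ hyX

theorem isSFT_of_hasShadowing [Finite S] [Finite A] (hι : ∀ s, ι (ι s) = s)
    {X : Set (Word ι → A)} (hX : IsShiftSpace ι X) (hsh : HasShadowing ι X) : IsSFT ι X := by
  cases isEmpty_or_nonempty A with
  | inl _ => exact ⟨∅, Set.finite_empty, Set.ext fun x => isEmptyElim (x (emptyWord ι))⟩
  | inr hA =>
    obtain ⟨a₀⟩ := hA
    obtain ⟨N, hN⟩ := hsh.exists_mem_of_locallyIn hι
    exact ⟨forbiddenBlocks X N a₀, finite_forbiddenBlocks X N a₀,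
      (subset_shiftOf_forbiddenBlocks hι hX N a₀).antisymm
        fun x hx => hN x (locallyIn_of_mem_shiftOf_forbiddenBlocks hx)⟩

end ShadowingSFT

theorem sft_iff_shadowing_general {S A : Type*} [DecidableEq S] [Fintype S] [Fintype A]
    (ι : S → S) (hι : ∀ s, ι (ι s) = s)
    (X : Set (Word ι → A)) (hX : IsShiftSpace ι X) :
    IsSFT ι X ↔
      ∀ ε > (0 : ℝ), ∃ δ > (0 : ℝ), ∀ 𝒪 : Word ι → (Word ι → A),
        (∀ u, 𝒪 u ∈ X) →
        (∀ (u : Word ι) (i : S),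
          shiftDist (shiftBy [i] (𝒪 u)) (𝒪 (wordMul u (word1 ι i))) < δ) →
        ∃ x ∈ X, ∀ u : Word ι, shiftDist (shiftBy u.1 x) (𝒪 u) < ε :=
  ⟨IsSFT.hasShadowing hι, isSFT_of_hasShadowing hι hX⟩

/-- a shift space over a finitely generated free group is a shift of
finite type iff it has the shadowing property: for every `ε > 0` there is `δ > 0`
such that every `δ`-pseudo-orbit `𝒪 : G → X` is `ε`-shadowed by a point of `X`. -/
theorem sft_iff_shadowing {S A : Type*} [DecidableEq S] [Fintype S] [Fintype A]
    (ι : S → S) (hι : ∀ s, ι (ι s) = s) (hιne : ∀ s, ι s ≠ s)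
    (X : Set (Word ι → A)) (hX : IsShiftSpace ι X) :
    IsSFT ι X ↔
      ∀ ε > (0 : ℝ), ∃ δ > (0 : ℝ), ∀ 𝒪 : Word ι → (Word ι → A),
        (∀ u, 𝒪 u ∈ X) →
        (∀ (u : Word ι) (i : S),
          shiftDist (shiftBy [i] (𝒪 u)) (𝒪 (wordMul u (word1 ι i))) < δ) →
        ∃ x ∈ X, ∀ u : Word ι, shiftDist (shiftBy u.1 x) (𝒪 u) < ε :=
  sft_iff_shadowing_general ι hι X hX
end
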